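/- arXiv:1811.09094 — 2 statements merged into one kernel-verified Lean document; each statement's English description precedes it below -/
import Mathlib

section
/- With notation as above, there exist constants $\delta_1 > \delta_2 > 0$ such that for every $n \ge 1$ and every $x \in (1/2,1]$, $\delta_2 n^{\gamma} \le u_n(x) \le \delta_1 n^{\gamma}$. -/
open Set Real

/-- For `t ∈ [0,1]`, `t * log 2 ≤ log (1 + t)` (concavity of `log` / convexity of `exp`). -/
private lemma aux_log_one_add_ge {t : ℝ} (h0 : 0 ≤ t) (h1 : t ≤ 1) :
    t * Real.log 2 ≤ Real.log (1 + t) := by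
  have hexp : Real.exp (t * Real.log 2) ≤ 1 + t := by
    have hc := convexOn_exp.2 (Set.mem_univ (0 : ℝ)) (Set.mem_univ (Real.log 2))
      (by linarith : (0:ℝ) ≤ 1 - t) h0 (by ring : (1 - t) + t = 1)
    simp only [smul_eq_mul, mul_zero, zero_add, Real.exp_zero, mul_one,
      Real.exp_log two_pos] at hc
    linarith
  calc t * Real.log 2 = Real.log (Real.exp (t * Real.log 2)) := (Real.log_exp _).symm
    _ ≤ Real.log (1 + t) := Real.log_le_log (Real.exp_pos _) hexp

/-- Two-sided convexity bounds for real powers: for `0 < a ≤ b` and `1 ≤ p`,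
`p * a ^ (p-1) * (b - a) ≤ b ^ p - a ^ p ≤ p * b ^ (p-1) * (b - a)`. -/
private lemma aux_rpow_diff {a b p : ℝ} (ha : 0 < a) (hab : a ≤ b) (hp : 1 ≤ p) :
    p * a ^ (p - 1) * (b - a) ≤ b ^ p - a ^ p ∧
      b ^ p - a ^ p ≤ p * b ^ (p - 1) * (b - a) := by
  have hb : 0 < b := ha.trans_le hab
  have hbp : (0:ℝ) < b ^ p := Real.rpow_pos_of_pos hb p
  have hap : (0:ℝ) < a ^ p := Real.rpow_pos_of_pos ha p
  constructor
  · -- lower bound, apply Bernoulli with s = b/a - 1 ≥ 0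
    have hs : (-1 : ℝ) ≤ b / a - 1 := by
      have : 0 < b / a := div_pos hb ha
      linarith
    have hber := one_add_mul_self_le_rpow_one_add hs hp
    have heq : (1 + (b / a - 1)) = b / a := by ring
    rw [heq, Real.div_rpow hb.le ha.le] at hber
    -- hber : 1 + p * (b/a - 1) ≤ b^p / a^p
    have h2 : a ^ p * (1 + p * (b / a - 1)) ≤ b ^ p := by
      have := mul_le_mul_of_nonneg_left hber hap.le
      rwa [mul_div_cancel₀ _ hap.ne'] at this
    have hpow : a ^ (p - 1) = a ^ p / a := by
      rw [Real.rpow_sub ha, Real.rpow_one]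
    rw [hpow]
    have hane : a ≠ 0 := ha.ne'
    have : a ^ p * (1 + p * (b / a - 1)) = a ^ p + p * (a ^ p / a) * (b - a) := by
      field_simp
    linarith [h2, this ▸ h2]
  · -- upper bound, apply Bernoulli with s = a/b - 1 ∈ [-1, 0]
    have hs : (-1 : ℝ) ≤ a / b - 1 := by
      have : 0 < a / b := div_pos ha hb
      linarith
    have hber := one_add_mul_self_le_rpow_one_add hs hp
    have heq : (1 + (a / b - 1)) = a / b := by ring
    rw [heq, Real.div_rpow ha.le hb.le] at hber
    have h2 : b ^ p * (1 + p * (a / b - 1)) ≤ a ^ p := by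
      have := mul_le_mul_of_nonneg_left hber hbp.le
      rwa [mul_div_cancel₀ _ hbp.ne'] at this
    have hpow : b ^ (p - 1) = b ^ p / b := by
      rw [Real.rpow_sub hb, Real.rpow_one]
    rw [hpow]
    have hbne : b ≠ 0 := hb.ne'
    have : b ^ p * (1 + p * (a / b - 1)) = b ^ p + p * (b ^ p / b) * (a - b) := by
      field_simp
    linarith [h2, this ▸ h2]

theorem lsv_un_polynomial_bounds (γ : ℝ) (hγ : γ ∈ Set.Ioc (0:ℝ) 1)
    (β c : ℝ) (hβ : β = γ⁻¹ - 1) (hc : c = (Real.log 2) ^ β)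
    (f g : ℝ → ℝ)
    (hf : ∀ x ∈ Set.Ioc (0:ℝ) (1/2), f x = x * (1 + c / |Real.log x| ^ β))
    (hf12 : f (1/2) = 1)
    (hg_mem : ∀ x ∈ Set.Ioc (0:ℝ) 1, g x ∈ Set.Ioc (0:ℝ) (1/2))
    (hg_inv : ∀ x ∈ Set.Ioc (0:ℝ) 1, f (g x) = x)
    (z u : ℕ → ℝ → ℝ)
    (hz : ∀ n x, z n x = g^[n] x)
    (hu : ∀ n x, u n x = -Real.log (z n x)) :
    ∃ δ₁ δ₂ : ℝ, δ₁ > δ₂ ∧ δ₂ > 0 ∧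
      ∀ n : ℕ, 1 ≤ n → ∀ x ∈ Set.Ioc (1/2 : ℝ) 1,
        δ₂ * (n : ℝ) ^ γ ≤ u n x ∧ u n x ≤ δ₁ * (n : ℝ) ^ γ := by
  obtain ⟨hγ0, hγ1⟩ := hγ
  have hγne : γ ≠ 0 := hγ0.ne'
  have hpinv : 0 < γ⁻¹ := inv_pos.mpr hγ0
  have hp1 : 1 ≤ γ⁻¹ := by
    have h := mul_inv_cancel₀ hγne
    nlinarith
  have hβ0 : 0 ≤ β := by rw [hβ]; linarith
  have hlog2 : 0 < Real.log 2 := Real.log_pos one_lt_two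
  have hc0 : 0 < c := by rw [hc]; exact Real.rpow_pos_of_pos hlog2 β
  have hpβ : γ⁻¹ - 1 = β := by rw [hβ]
  -- constants
  set d : ℝ := γ⁻¹ * c * Real.log 2 * (1/2 : ℝ) ^ β with hd_def
  set m : ℝ := min ((Real.log 2) ^ γ⁻¹) d with hm_def
  set M : ℝ := (2 * Real.log 2) ^ γ⁻¹ + γ⁻¹ * c with hM_def
  have hhalfβ : (0:ℝ) < (1/2 : ℝ) ^ β := Real.rpow_pos_of_pos (by norm_num) β
  have hd0 : 0 < d := by positivity
  have hm0 : 0 < m := lt_min (Real.rpow_pos_of_pos hlog2 _) hd0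
  have hmM : m < M := by
    have h1 : (Real.log 2) ^ γ⁻¹ < (2 * Real.log 2) ^ γ⁻¹ :=
      Real.rpow_lt_rpow hlog2.le (by linarith) hpinv
    have h2 : m ≤ (Real.log 2) ^ γ⁻¹ := min_le_left _ _
    have h3 : 0 < γ⁻¹ * c := by positivity
    rw [hM_def]
    linarith
  refine ⟨M ^ γ, m ^ γ, Real.rpow_lt_rpow hm0.le hmM hγ0, Real.rpow_pos_of_pos hm0 γ, ?_⟩
  intro n hn x hx
  obtain ⟨hx1, hx2⟩ := hx
  have hx01 : x ∈ Set.Ioc (0:ℝ) 1 := ⟨by linarith, hx2⟩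
  -- basic facts about the orbit
  have hz0 : ∀ k, g^[k] x ∈ Set.Ioc (0:ℝ) 1 := by
    intro k
    induction k with
    | zero => simpa using hx01
    | succ k ih =>
      rw [Function.iterate_succ_apply']
      have h := hg_mem _ ih
      exact ⟨h.1, h.2.trans (by norm_num)⟩
  have hz1 : ∀ k, z (k+1) x ∈ Set.Ioc (0:ℝ) (1/2) := by
    intro k
    rw [hz, Function.iterate_succ_apply']
    exact hg_mem _ (hz0 k)
  have hzrec : ∀ k, f (z (k+1) x) = z k x := by
    intro k
    rw [hz, hz, Function.iterate_succ_apply']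
    exact hg_inv _ (hz0 k)
  have hupos : ∀ k, Real.log 2 ≤ u (k+1) x := by
    intro k
    rw [hu]
    have h := hz1 k
    have hle : Real.log (z (k+1) x) ≤ Real.log (1/2) := Real.log_le_log h.1 h.2
    have : Real.log (1/2 : ℝ) = -Real.log 2 := by
      rw [one_div, Real.log_inv]
    linarith
  have hu0pos : ∀ k, 0 < u (k+1) x := fun k => hlog2.trans_le (hupos k)
  -- the basic recurrence
  have hrec : ∀ k, u k x = u (k+1) x - Real.log (1 + c / (u (k+1) x) ^ β) := by
    intro k
    have hy := hz1 k
    have hylog : Real.log (z (k+1) x) ≤ 0 :=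
      Real.log_nonpos hy.1.le (hy.2.trans (by norm_num))
    have habs : |Real.log (z (k+1) x)| = u (k+1) x := by
      rw [hu, abs_of_nonpos hylog]
    have hs : 0 < u (k+1) x := hu0pos k
    have ht0 : 0 < c / (u (k+1) x) ^ β :=
      div_pos hc0 (Real.rpow_pos_of_pos hs β)
    have hfy := hzrec k
    rw [hf _ hy, habs] at hfy
    -- hfy : z (k+1) x * (1 + c / (u (k+1) x) ^ β) = z k x
    rw [hu k x, ← hfy, Real.log_mul hy.1.ne' (by positivity), hu (k+1) x]
    ring
  have ht1 : ∀ k, c / (u (k+1) x) ^ β ≤ 1 := by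
    intro k
    have hle : c ≤ (u (k+1) x) ^ β := by
      rw [hc]
      exact Real.rpow_le_rpow hlog2.le (hupos k) hβ0
    exact (div_le_one (Real.rpow_pos_of_pos (hu0pos k) β)).mpr hle
  have ht0 : ∀ k, 0 < c / (u (k+1) x) ^ β := fun k =>
    div_pos hc0 (Real.rpow_pos_of_pos (hu0pos k) β)
  have hlog_le : ∀ k, Real.log (1 + c / (u (k+1) x) ^ β) ≤ Real.log 2 := by
    intro k
    have := Real.log_le_log (by linarith [ht0 k]) (by linarith [ht1 k] :
      1 + c / (u (k+1) x) ^ β ≤ 2)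
    exact this
  have hmono : ∀ k, u k x ≤ u (k+1) x := by
    intro k
    rw [hrec k]
    have : 0 ≤ Real.log (1 + c / (u (k+1) x) ^ β) :=
      Real.log_nonneg (by linarith [ht0 k])
    linarith
  have hstep_up : ∀ k, u (k+1) x - u k x ≤ c / (u (k+1) x) ^ β := by
    intro k
    rw [hrec k]
    have h := Real.log_le_sub_one_of_pos (x := 1 + c / (u (k+1) x) ^ β)
      (by linarith [ht0 k])
    linarith
  have hstep_lo : ∀ k, c / (u (k+1) x) ^ β * Real.log 2 ≤ u (k+1) x - u k x := by
    intro k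
    rw [hrec k]
    have h := aux_log_one_add_ge (ht0 k).le (ht1 k)
    linarith
  have hdouble : ∀ k, u (k+2) x ≤ 2 * u (k+1) x := by
    intro k
    have h1 := hrec (k+1)
    have h2 := hlog_le (k+1)
    have h3 := hupos k
    linarith
  have hu1up : u 1 x ≤ 2 * Real.log 2 := by
    have h1 := hrec 0
    have h2 := hlog_le 0
    have h3 : -Real.log x ≤ Real.log 2 := by
      have := Real.log_le_log (by norm_num : (0:ℝ) < 1/2) hx1.le
      have h4 : Real.log (1/2 : ℝ) = -Real.log 2 := by rw [one_div, Real.log_inv]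
      linarith
    have h5 : u 0 x = -Real.log x := by
      rw [hu, hz]; simp
    linarith
  -- increment bounds for W k = (u k x) ^ γ⁻¹
  have hW_up : ∀ k, (u (k+2) x) ^ γ⁻¹ ≤ (u (k+1) x) ^ γ⁻¹ + γ⁻¹ * c := by
    intro k
    obtain ⟨-, hup⟩ := aux_rpow_diff (hu0pos k) (hmono (k+1)) hp1
    rw [hpβ] at hup
    have hb := hu0pos (k+1)
    have hbβ : (0:ℝ) < (u (k+2) x) ^ β := Real.rpow_pos_of_pos hb β
    have h1 : γ⁻¹ * (u (k+2) x) ^ β * (u (k+2) x - u (k+1) x) ≤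
        γ⁻¹ * (u (k+2) x) ^ β * (c / (u (k+2) x) ^ β) := by
      apply mul_le_mul_of_nonneg_left (hstep_up (k+1)) (by positivity)
    have h2 : γ⁻¹ * (u (k+2) x) ^ β * (c / (u (k+2) x) ^ β) = γ⁻¹ * c := by
      field_simp
    linarith
  have hW_lo : ∀ k, (u (k+1) x) ^ γ⁻¹ + d ≤ (u (k+2) x) ^ γ⁻¹ := by
    intro k
    obtain ⟨hlo, -⟩ := aux_rpow_diff (hu0pos k) (hmono (k+1)) hp1
    rw [hpβ] at hlo
    have ha := hu0pos k
    have hb := hu0pos (k+1)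
    have haβ : (0:ℝ) < (u (k+1) x) ^ β := Real.rpow_pos_of_pos ha β
    have hbβ : (0:ℝ) < (u (k+2) x) ^ β := Real.rpow_pos_of_pos hb β
    have h1 : γ⁻¹ * (u (k+1) x) ^ β * (c / (u (k+2) x) ^ β * Real.log 2) ≤
        γ⁻¹ * (u (k+1) x) ^ β * (u (k+2) x - u (k+1) x) := by
      apply mul_le_mul_of_nonneg_left (hstep_lo (k+1)) (by positivity)
    -- (1/2)^β ≤ (u(k+1)/u(k+2))^β since u(k+2) ≤ 2 u(k+1)
    have hratio : (1/2 : ℝ) ^ β ≤ (u (k+1) x) ^ β / (u (k+2) x) ^ β := by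
      rw [← Real.div_rpow ha.le hb.le]
      apply Real.rpow_le_rpow (by norm_num)
      · rw [le_div_iff₀ hb]
        have := hdouble k
        linarith
      · exact hβ0
    have h2 : d ≤ γ⁻¹ * (u (k+1) x) ^ β * (c / (u (k+2) x) ^ β * Real.log 2) := by
      have h3 : γ⁻¹ * (u (k+1) x) ^ β * (c / (u (k+2) x) ^ β * Real.log 2) =
          γ⁻¹ * c * Real.log 2 * ((u (k+1) x) ^ β / (u (k+2) x) ^ β) := by
        field_simp
      rw [h3, hd_def]
      apply mul_le_mul_of_nonneg_left hratio (by positivity)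
    linarith
  -- linear bounds on W by induction
  have hWn : ∀ k : ℕ, (u (k+1) x) ^ γ⁻¹ ≤ (u 1 x) ^ γ⁻¹ + k * (γ⁻¹ * c) ∧
      (u 1 x) ^ γ⁻¹ + k * d ≤ (u (k+1) x) ^ γ⁻¹ := by
    intro k
    induction k with
    | zero => simp
    | succ k ih =>
      obtain ⟨ih1, ih2⟩ := ih
      have h1 := hW_up k
      have h2 := hW_lo k
      constructor <;> push_cast <;> linarith
  -- bounds on W 1
  have hW1up : (u 1 x) ^ γ⁻¹ ≤ (2 * Real.log 2) ^ γ⁻¹ :=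
    Real.rpow_le_rpow (hu0pos 0).le hu1up (by positivity)
  have hW1lo : (Real.log 2) ^ γ⁻¹ ≤ (u 1 x) ^ γ⁻¹ :=
    Real.rpow_le_rpow hlog2.le (hupos 0) (by positivity)
  obtain ⟨k, rfl⟩ : ∃ k, n = k + 1 := ⟨n - 1, (Nat.succ_pred_eq_of_pos hn).symm⟩
  have hk0 : (0:ℝ) ≤ (k : ℝ) := Nat.cast_nonneg k
  obtain ⟨hWk1, hWk2⟩ := hWn k
  -- combine
  have hWup' : (u (k+1) x) ^ γ⁻¹ ≤ ((k:ℝ) + 1) * M := by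
    have h1 : (k:ℝ) * (γ⁻¹ * c) ≤ (k:ℝ) * M := by
      apply mul_le_mul_of_nonneg_left _ hk0
      have : (0:ℝ) ≤ (2 * Real.log 2) ^ γ⁻¹ := by positivity
      rw [hM_def]; linarith
    have h2 : (2 * Real.log 2) ^ γ⁻¹ ≤ M := by
      have : (0:ℝ) < γ⁻¹ * c := by positivity
      rw [hM_def]; linarith
    linarith [hWk1, hW1up]
  have hWlo' : ((k:ℝ) + 1) * m ≤ (u (k+1) x) ^ γ⁻¹ := by
    have h1 : (k:ℝ) * m ≤ (k:ℝ) * d :=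
      mul_le_mul_of_nonneg_left (min_le_right _ _) hk0
    have h2 : m ≤ (Real.log 2) ^ γ⁻¹ := min_le_left _ _
    linarith [hWk2, hW1lo]
  -- convert back: u = (W) ^ γ
  have hun0 : 0 < u (k+1) x := hu0pos k
  have hback : ((u (k+1) x) ^ γ⁻¹) ^ γ = u (k+1) x := by
    rw [← Real.rpow_mul hun0.le, inv_mul_cancel₀ hγne, Real.rpow_one]
  have hcast : ((k+1 : ℕ) : ℝ) = (k:ℝ) + 1 := by push_cast; ring
  constructor
  · -- lower bound
    calc m ^ γ * ((k+1 : ℕ) : ℝ) ^ γ = (m * ((k:ℝ) + 1)) ^ γ := by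
          rw [hcast, ← Real.mul_rpow hm0.le (by linarith)]
      _ ≤ ((u (k+1) x) ^ γ⁻¹) ^ γ := by
          apply Real.rpow_le_rpow (by positivity) _ hγ0.le
          linarith [hWlo']
      _ = u (k+1) x := hback
  · -- upper bound
    calc u (k+1) x = ((u (k+1) x) ^ γ⁻¹) ^ γ := hback.symm
      _ ≤ (M * ((k:ℝ) + 1)) ^ γ := by
          apply Real.rpow_le_rpow (by positivity) _ hγ0.le
          linarith [hWup']
      _ = M ^ γ * ((k+1 : ℕ) : ℝ) ^ γ := by
          rw [hcast, ← Real.mul_rpow (by positivity) (by linarith)]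
end

section
/- Let $u_0 > 0$ and suppose $(u_n)_{n\ge0}$ is an increasing sequence of positive reals satisfying $u_{n+1} - u_n = \log(1 + c\,u_{n+1}^{-\beta})$ for constants $c, \beta > 0$. Then there is a constant $K > 0$ such that $u_{n+1}^{\beta+1} \le K (n+1)$ for all $n$, i.e. $u_n = O(n^{1/(\beta+1)})$. -/
open Real

lemma rpow_sub_rpow_le_aux (p : ℝ) (hp : 1 ≤ p) {x y : ℝ} (hy : 0 < y) (hxy : y ≤ x) :
    x ^ p - y ^ p ≤ p * x ^ (p - 1) * (x - y) := by
  have hx : 0 < x := hy.trans_le hxy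
  have hs : -1 ≤ y / x - 1 := by
    have : 0 ≤ y / x := by positivity
    linarith
  have hber := one_add_mul_self_le_rpow_one_add hs hp
  have h1s : 1 + (y / x - 1) = y / x := by ring
  rw [h1s] at hber
  have hdiv : (y / x) ^ p = y ^ p / x ^ p := Real.div_rpow hy.le hx.le p
  rw [hdiv] at hber
  have hxp : 0 < x ^ p := Real.rpow_pos_of_pos hx p
  have hx1 : x ^ (p - 1) = x ^ p / x := by
    rw [Real.rpow_sub hx, Real.rpow_one]
  rw [hx1]
  -- hber : 1 + p * (y / x - 1) ≤ y ^ p / x ^ p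
  have hber' : x ^ p * (1 + p * (y / x - 1)) ≤ y ^ p := by
    calc x ^ p * (1 + p * (y / x - 1)) ≤ x ^ p * (y ^ p / x ^ p) := by
          exact mul_le_mul_of_nonneg_left hber hxp.le
      _ = y ^ p := by field_simp
  have hne : x ≠ 0 := hx.ne'
  have : x ^ p * (1 + p * (y / x - 1)) = x ^ p + p * (x ^ p / x) * (y - x) := by
    field_simp
  rw [this] at hber'
  linarith

theorem un_upper_bound (c β : ℝ) (hc : 0 < c) (hβ : 0 < β)
    (u : ℕ → ℝ) (hpos : ∀ n, 0 < u n) (hmono : StrictMono u)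
    (hrec : ∀ n, u (n+1) - u n = Real.log (1 + c * (u (n+1)) ^ (-β))) :
    ∃ K > 0, ∀ n : ℕ, (u (n+1)) ^ (β + 1) ≤ K * (n + 1 : ℝ) := by
  have h0 : 0 < u 0 := hpos 0
  have hK0 : 0 < u 0 ^ (β + 1) := Real.rpow_pos_of_pos h0 _
  refine ⟨u 0 ^ (β + 1) + (β + 1) * c, by positivity, ?_⟩
  have step : ∀ k : ℕ, u (k+1) ^ (β + 1) ≤ u k ^ (β + 1) + (β + 1) * c := by
    intro k
    have hx : 0 < u (k+1) := hpos (k+1)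
    have hy : 0 < u k := hpos k
    have hxy : u k ≤ u (k+1) := (hmono (Nat.lt_succ_self k)).le
    have hrpos : 0 < c * u (k+1) ^ (-β) := by
      have := Real.rpow_pos_of_pos hx (-β); positivity
    have hlog : Real.log (1 + c * u (k+1) ^ (-β)) ≤ c * u (k+1) ^ (-β) := by
      have h := Real.log_le_sub_one_of_pos (x := 1 + c * u (k+1) ^ (-β)) (by linarith)
      linarith
    have hdiff : u (k+1) - u k ≤ c * u (k+1) ^ (-β) := by
      rw [hrec k]; exact hlog
    have hconv := rpow_sub_rpow_le_aux (β + 1) (by linarith) hy hxy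
    have hβ1 : β + 1 - 1 = β := by ring
    rw [hβ1] at hconv
    have hbpos : 0 < u (k+1) ^ β := Real.rpow_pos_of_pos hx β
    have hcancel : u (k+1) ^ β * u (k+1) ^ (-β) = 1 := by
      rw [← Real.rpow_add hx]; simp
    have h2 : (β + 1) * u (k+1) ^ β * (u (k+1) - u k) ≤
        (β + 1) * u (k+1) ^ β * (c * u (k+1) ^ (-β)) := by
      apply mul_le_mul_of_nonneg_left hdiff (by positivity)
    have h3 : (β + 1) * u (k+1) ^ β * (c * u (k+1) ^ (-β)) = (β + 1) * c := by
      calc (β + 1) * u (k+1) ^ β * (c * u (k+1) ^ (-β))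
          = (β + 1) * c * (u (k+1) ^ β * u (k+1) ^ (-β)) := by ring
        _ = (β + 1) * c := by rw [hcancel]; ring
    linarith
  have main : ∀ n : ℕ, u (n+1) ^ (β + 1) ≤ u 0 ^ (β + 1) + (n + 1 : ℝ) * ((β + 1) * c) := by
    intro n
    induction n with
    | zero => have := step 0; push_cast; linarith
    | succ m ih =>
        have := step (m + 1)
        push_cast at ih ⊢
        linarith
  intro n
  have hn1 : (1 : ℝ) ≤ (n : ℝ) + 1 := by have : (0:ℝ) ≤ n := Nat.cast_nonneg n; linarith
  have hcpos : 0 < (β + 1) * c := by positivity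
  have := main n
  nlinarith [hK0, mul_le_mul_of_nonneg_left hn1 hK0.le]
end
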